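/- Let $X$ be a Banach space with $\rho_X(\tau) \le s\tau^2$ for all $\tau > 0$, let $q \ge 2$, and let $(\Omega, \mu)$ be a measure space. Then the Bochner space $L_q(X, \Omega, \mu)$ satisfies $\rho_{L_q(X,\Omega,\mu)}(\tau) \le 4(s+q)\tau^2$ for every $\tau > 0$. -/

import Mathlib

/-!
Pointwise, for `x, y ∈ X` write `a = ‖x + y‖`, `b = ‖x - y‖`. The smoothness hypothesis bounds
the mean `(a + b) / 2` by `√(‖x‖² + (4s + 1)‖y‖²)`, the triangle inequality bounds `|a - b| / 2`
by `‖y‖`, and an elementary two-point inequality `a^q + b^q ≤ 2 (m² + (8q - 2) d²)^{q/2}`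
(with `m`, `d` the half sum and half difference) gives
`‖x + y‖^q + ‖x - y‖^q ≤ 2 (‖x‖² + C ‖y‖²)^{q/2}`, `C = 4s + 8q - 1`.
Integrating over `Ω` and applying Minkowski's inequality in `L_{q/2}` to `‖f‖² + C ‖g‖²` lifts
this inequality verbatim to `L_q(X)`. For unit `f, g` it reads
`‖f + τg‖^q + ‖f - τg‖^q ≤ 2 (1 + Cτ²)^{q/2}`, and the power-mean inequality turns it into
`(‖f + τg‖ + ‖f - τg‖) / 2 ≤ √(1 + Cτ²) ≤ 1 + Cτ²/2`.
-/

open MeasureTheory Real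
open scoped ENNReal

lemma sq_rpow_half {x : ℝ} (hx : 0 ≤ x) (q : ℝ) : (x ^ 2) ^ (q / 2) = x ^ q := by
  rw [← rpow_natCast, ← rpow_mul hx, Nat.cast_ofNat, mul_div_cancel₀ q two_ne_zero]

lemma one_add_rpow_add_one_sub_rpow_le {q t : ℝ} (hq : 2 ≤ q) (ht₀ : 0 ≤ t) (ht₁ : t ≤ 1) :
    (1 + t) ^ q + (1 - t) ^ q ≤ 2 * (1 + (8 * q - 2) * t ^ 2) ^ (q / 2) := by
  have hq₀ : 0 ≤ q := by linarith
  rcases le_or_gt 1 (2 * q * t) with hbig | hsmall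
  · have hsq : (1 + t) ^ 2 ≤ 1 + (8 * q - 2) * t ^ 2 := by nlinarith
    calc (1 + t) ^ q + (1 - t) ^ q ≤ 2 * (1 + t) ^ q := by
          linarith [rpow_le_rpow (by linarith) (by linarith : 1 - t ≤ 1 + t) hq₀]
      _ = 2 * ((1 + t) ^ 2) ^ (q / 2) := by rw [sq_rpow_half (by linarith)]
      _ ≤ _ := by gcongr
  · have hexp : exp (q * t ^ 2) ≤ 1 + 2 * (q * t ^ 2) := by
      have hu : |q * t ^ 2| ≤ 1 := by
        rw [abs_of_nonneg (by positivity)]; nlinarith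
      have := abs_exp_sub_one_le hu
      rw [abs_of_nonneg (by positivity : 0 ≤ q * t ^ 2)] at this
      linarith [le_abs_self (exp (q * t ^ 2) - 1)]
    calc (1 + t) ^ q + (1 - t) ^ q ≤ exp t ^ q + exp (-t) ^ q := by
          gcongr <;> linarith [add_one_le_exp t, add_one_le_exp (-t)]
      _ = 2 * cosh (q * t) := by
          rw [cosh_eq, ← exp_mul, ← exp_mul]; ring_nf
      _ ≤ 2 * exp ((q * t) ^ 2 / 2) := by gcongr; exact cosh_le_exp_half_sq _
      _ = 2 * exp (q * t ^ 2) ^ (q / 2) := by rw [← exp_mul]; ring_nf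
      _ ≤ 2 * (1 + (8 * q - 2) * t ^ 2) ^ (q / 2) := by
          gcongr
          nlinarith

lemma rpow_add_rpow_le_two_point {q a b : ℝ} (hq : 2 ≤ q) (ha : 0 ≤ a) (hb : 0 ≤ b) :
    a ^ q + b ^ q ≤ 2 * (((a + b) / 2) ^ 2 + (8 * q - 2) * ((a - b) / 2) ^ 2) ^ (q / 2) := by
  wlog hba : b ≤ a generalizing a b
  · have := this hb ha (by linarith)
    rwa [add_comm b, add_comm (b ^ q), ← neg_sub a b, neg_div, neg_sq] at this
  rcases eq_or_lt_of_le (add_nonneg ha hb) with hab | hab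
  · obtain ⟨rfl, rfl⟩ : a = 0 ∧ b = 0 := ⟨by linarith, by linarith⟩
    rw [zero_rpow (by positivity), add_zero]
    exact mul_nonneg zero_le_two (rpow_nonneg (by norm_num) _)
  set m := (a + b) / 2
  set t := (a - b) / (a + b)
  have hm : 0 < m := by positivity
  have ha' : a = m * (1 + t) := by simp only [m, t]; field_simp; ring
  have hb' : b = m * (1 - t) := by simp only [m, t]; field_simp; ring
  have hd : (a - b) / 2 = m * t := by simp only [m, t]; field_simp
  have ht₀ : 0 ≤ t := div_nonneg (by linarith) hab.le
  have ht₁ : t ≤ 1 := (div_le_one hab).2 (by linarith)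
  calc a ^ q + b ^ q = m ^ q * ((1 + t) ^ q + (1 - t) ^ q) := by
        rw [ha', hb', mul_rpow hm.le (by linarith), mul_rpow hm.le (by linarith), mul_add]
    _ ≤ m ^ q * (2 * (1 + (8 * q - 2) * t ^ 2) ^ (q / 2)) := by
        gcongr; exact one_add_rpow_add_one_sub_rpow_le hq ht₀ ht₁
    _ = 2 * (m ^ 2 + (8 * q - 2) * (m * t) ^ 2) ^ (q / 2) := by
        rw [show m ^ 2 + (8 * q - 2) * (m * t) ^ 2 = m ^ 2 * (1 + (8 * q - 2) * t ^ 2) by ring,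
          mul_rpow (by positivity) (by nlinarith), sq_rpow_half hm.le]
        ring
    _ = _ := by rw [hd]

lemma sq_add_div_two_le_of_rpow_add_rpow_le {a b N q : ℝ} (ha : 0 ≤ a) (hb : 0 ≤ b) (hN : 0 ≤ N)
    (hq : 1 ≤ q) (h : a ^ q + b ^ q ≤ 2 * N ^ (q / 2)) : ((a + b) / 2) ^ 2 ≤ N := by
  have hconv := (convexOn_rpow hq).2 (Set.mem_Ici.2 ha) (Set.mem_Ici.2 hb)
    (by norm_num : (0 : ℝ) ≤ 1 / 2) (by norm_num : (0 : ℝ) ≤ 1 / 2) (add_halves 1)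
  simp only [smul_eq_mul] at hconv
  rw [← rpow_le_rpow_iff (by positivity) hN (by linarith : 0 < q / 2), sq_rpow_half (by positivity)]
  calc ((a + b) / 2) ^ q = (1 / 2 * a + 1 / 2 * b) ^ q := by ring_nf
    _ ≤ 1 / 2 * a ^ q + 1 / 2 * b ^ q := hconv
    _ ≤ N ^ (q / 2) := by linarith

section SmoothNormedSpace

variable {X : Type*} [NormedAddCommGroup X] [NormedSpace ℝ X] {s : ℝ}

lemma smoothness_const_nonneg
    (hρ : ∀ τ : ℝ, 0 < τ → ∀ x y : X, ‖x‖ = 1 → ‖y‖ = 1 →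
      (‖x + τ • y‖ + ‖x - τ • y‖) / 2 - 1 ≤ s * τ ^ 2)
    {z : X} (hz : z ≠ 0) : 0 ≤ s := by
  have hu : ‖‖z‖⁻¹ • z‖ = 1 := norm_smul_inv_norm hz
  have := hρ 1 one_pos _ _ hu hu
  rw [one_smul, sub_self, norm_zero, add_zero, ← two_smul ℝ, norm_smul, hu] at this
  norm_num at this
  linarith

lemma norm_mul_norm_add_add_norm_sub_le
    (hρ : ∀ τ : ℝ, 0 < τ → ∀ x y : X, ‖x‖ = 1 → ‖y‖ = 1 →
      (‖x + τ • y‖ + ‖x - τ • y‖) / 2 - 1 ≤ s * τ ^ 2)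
    {x : X} (hx : x ≠ 0) (y : X) :
    ‖x‖ * (‖x + y‖ + ‖x - y‖) ≤ 2 * (‖x‖ ^ 2 + s * ‖y‖ ^ 2) := by
  rcases eq_or_ne y 0 with rfl | hy
  · simp only [add_zero, sub_zero, norm_zero]
    nlinarith
  have hxn : 0 < ‖x‖ := norm_pos_iff.2 hx
  have hyn : 0 < ‖y‖ := norm_pos_iff.2 hy
  have hscale : (‖y‖ / ‖x‖) • (‖y‖⁻¹ • y) = ‖x‖⁻¹ • y := by
    rw [smul_smul]; congr 1; field_simp
  have unit {z : X} (hz : 0 < ‖z‖) : ‖‖z‖⁻¹ • z‖ = 1 := by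
    rw [norm_smul, norm_inv, norm_norm, inv_mul_cancel₀ hz.ne']
  have key := hρ (‖y‖ / ‖x‖) (by positivity) _ _ (unit hxn) (unit hyn)
  rw [hscale, ← smul_add, ← smul_sub, norm_smul, norm_smul, norm_inv, norm_norm] at key
  have := mul_le_mul_of_nonneg_left key (by positivity : 0 ≤ 2 * ‖x‖ ^ 2)
  field_simp at this
  linarith

lemma sq_half_norm_add_add_norm_sub_le
    (hρ : ∀ τ : ℝ, 0 < τ → ∀ x y : X, ‖x‖ = 1 → ‖y‖ = 1 →
      (‖x + τ • y‖ + ‖x - τ • y‖) / 2 - 1 ≤ s * τ ^ 2)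
    (hs : 0 ≤ s) (x y : X) :
    ((‖x + y‖ + ‖x - y‖) / 2) ^ 2 ≤ ‖x‖ ^ 2 + (4 * s + 1) * ‖y‖ ^ 2 := by
  have hm₀ : 0 ≤ (‖x + y‖ + ‖x - y‖) / 2 := by positivity
  rcases le_or_gt ‖x‖ (2 * s * ‖y‖) with hsmall | hbig
  · have : (‖x + y‖ + ‖x - y‖) / 2 ≤ ‖x‖ + ‖y‖ := by
      linarith [norm_add_le x y, norm_sub_le x y]
    nlinarith [norm_nonneg x, norm_nonneg y]
  · have hxn : 0 < ‖x‖ := lt_of_le_of_lt (by positivity) hbig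
    have hmul : ‖x‖ * ((‖x + y‖ + ‖x - y‖) / 2) ≤ ‖x‖ ^ 2 + s * ‖y‖ ^ 2 := by
      linarith [norm_mul_norm_add_add_norm_sub_le hρ (norm_pos_iff.1 hxn) y]
    have hsq := pow_le_pow_left₀ (by positivity) hmul 2
    have hsy : (s * ‖y‖) ^ 2 ≤ (‖x‖ / 2) ^ 2 := pow_le_pow_left₀ (by positivity) (by linarith) 2
    refine le_of_mul_le_mul_left ?_ (by positivity : 0 < ‖x‖ ^ 2)
    nlinarith [mul_le_mul_of_nonneg_right hsy (sq_nonneg ‖y‖),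
      mul_nonneg (mul_nonneg hs (sq_nonneg ‖x‖)) (sq_nonneg ‖y‖)]

lemma norm_add_rpow_add_norm_sub_rpow_le
    (hρ : ∀ τ : ℝ, 0 < τ → ∀ x y : X, ‖x‖ = 1 → ‖y‖ = 1 →
      (‖x + τ • y‖ + ‖x - τ • y‖) / 2 - 1 ≤ s * τ ^ 2)
    (hs : 0 ≤ s) {q : ℝ} (hq : 2 ≤ q) (x y : X) :
    ‖x + y‖ ^ q + ‖x - y‖ ^ q ≤ 2 * (‖x‖ ^ 2 + (4 * s + 8 * q - 1) * ‖y‖ ^ 2) ^ (q / 2) := by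
  have hdiff : ((‖x + y‖ - ‖x - y‖) / 2) ^ 2 ≤ ‖y‖ ^ 2 := by
    have h := abs_norm_sub_norm_le (x + y) (x - y)
    rw [show x + y - (x - y) = (2 : ℝ) • y by rw [two_smul]; abel, norm_smul,
      Real.norm_two] at h
    rw [div_pow, ← sq_abs]
    nlinarith [abs_nonneg (‖x + y‖ - ‖x - y‖)]
  refine (rpow_add_rpow_le_two_point hq (norm_nonneg _) (norm_nonneg _)).trans ?_
  gcongr 2 * ?_ ^ _
  · nlinarith [sq_nonneg (‖x + y‖ - ‖x - y‖)]
  · nlinarith [sq_half_norm_add_add_norm_sub_le hρ hs x y]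

end SmoothNormedSpace

lemma norm_add_rpow_add_norm_sub_rpow_le_iff_enorm {E : Type*} [SeminormedAddCommGroup E] {q C : ℝ} (hq : 0 ≤ q)
    (hC : 0 ≤ C) (x y : E) :
    ‖x + y‖ ^ q + ‖x - y‖ ^ q ≤ 2 * (‖x‖ ^ 2 + C * ‖y‖ ^ 2) ^ (q / 2) ↔
      ‖x + y‖ₑ ^ q + ‖x - y‖ₑ ^ q ≤ 2 * (‖x‖ₑ ^ 2 + ENNReal.ofReal C * ‖y‖ₑ ^ 2) ^ (q / 2) := by
  have hrpow (z : E) : ‖z‖ₑ ^ q = ENNReal.ofReal (‖z‖ ^ q) := by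
    rw [← ofReal_norm, ENNReal.ofReal_rpow_of_nonneg (norm_nonneg _) hq]
  have hbase : 0 ≤ ‖x‖ ^ 2 + C * ‖y‖ ^ 2 := by positivity
  have hsum : ‖x‖ₑ ^ 2 + ENNReal.ofReal C * ‖y‖ₑ ^ 2 = ENNReal.ofReal (‖x‖ ^ 2 + C * ‖y‖ ^ 2) := by
    rw [← ofReal_norm, ← ofReal_norm, ← ENNReal.ofReal_pow (norm_nonneg _),
      ← ENNReal.ofReal_pow (norm_nonneg _), ← ENNReal.ofReal_mul hC,
      ← ENNReal.ofReal_add (by positivity) (by positivity)]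
  rw [hrpow, hrpow, hsum, ← ENNReal.ofReal_add (by positivity) (by positivity),
    ENNReal.ofReal_rpow_of_nonneg hbase (by positivity), ← ENNReal.ofReal_ofNat 2,
    ← ENNReal.ofReal_mul zero_le_two, ENNReal.ofReal_le_ofReal_iff (by positivity)]

lemma lintegral_add_rpow_le {Ω : Type*} [MeasurableSpace Ω] {μ : Measure Ω} {u v : Ω → ℝ≥0∞}
    (hu : AEMeasurable u μ) (hv : AEMeasurable v μ) {r : ℝ} (hr : 1 ≤ r) :
    ∫⁻ ω, (u ω + v ω) ^ r ∂μ ≤ ((∫⁻ ω, u ω ^ r ∂μ) ^ (1 / r) + (∫⁻ ω, v ω ^ r ∂μ) ^ (1 / r)) ^ r := by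
  calc ∫⁻ ω, (u ω + v ω) ^ r ∂μ = ((∫⁻ ω, (u + v) ω ^ r ∂μ) ^ (1 / r)) ^ r := by
        rw [← ENNReal.rpow_mul, one_div_mul_cancel (by positivity), ENNReal.rpow_one]; rfl
    _ ≤ _ := by gcongr; exact ENNReal.lintegral_Lp_add_le hu hv hr

namespace MeasureTheory.Lp

variable {E : Type*} [NormedAddCommGroup E] {Ω : Type*} [MeasurableSpace Ω] {μ : Measure Ω}
  {q : ℝ} [Fact (1 ≤ ENNReal.ofReal q)]

lemma enorm_rpow_eq_lintegral (hq : 0 < q) (h : Lp E (ENNReal.ofReal q) μ) :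
    ‖h‖ₑ ^ q = ∫⁻ ω, ‖h ω‖ₑ ^ q ∂μ := by
  rw [enorm_def, eLpNorm_eq_lintegral_rpow_enorm_toReal (by simpa using hq) ENNReal.ofReal_ne_top,
    ENNReal.toReal_ofReal hq.le, ← ENNReal.rpow_mul, one_div_mul_cancel hq.ne', ENNReal.rpow_one]

lemma lintegral_mul_enorm_sq_rpow (hq : 0 < q) (c : ℝ≥0∞) (h : Lp E (ENNReal.ofReal q) μ) :
    (∫⁻ ω, (c * ‖h ω‖ₑ ^ 2) ^ (q / 2) ∂μ) ^ (1 / (q / 2)) = c * ‖h‖ₑ ^ 2 := by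
  have hsq (x : ℝ≥0∞) : (x ^ 2) ^ (q / 2) = x ^ q := by
    rw [← ENNReal.rpow_natCast, ← ENNReal.rpow_mul, Nat.cast_ofNat, mul_div_cancel₀ q two_ne_zero]
  simp only [ENNReal.mul_rpow_of_nonneg _ _ (by positivity : 0 ≤ q / 2), hsq]
  rw [lintegral_const_mul'' _ ((Lp.aestronglyMeasurable h).enorm.pow_const q),
    ← enorm_rpow_eq_lintegral hq, ENNReal.mul_rpow_of_nonneg _ _ (by positivity), ← hsq,
    ← ENNReal.rpow_mul, ← ENNReal.rpow_mul, mul_one_div_cancel (by positivity),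
    ENNReal.rpow_one, ENNReal.rpow_one]

lemma norm_add_rpow_add_norm_sub_rpow_le (hq : 2 ≤ q) {C : ℝ} (hC : 0 ≤ C)
    (hE : ∀ x y : E, ‖x + y‖ ^ q + ‖x - y‖ ^ q ≤ 2 * (‖x‖ ^ 2 + C * ‖y‖ ^ 2) ^ (q / 2))
    (f g : Lp E (ENNReal.ofReal q) μ) :
    ‖f + g‖ ^ q + ‖f - g‖ ^ q ≤ 2 * (‖f‖ ^ 2 + C * ‖g‖ ^ 2) ^ (q / 2) := by
  have hq₀ : 0 < q := by linarith
  rw [norm_add_rpow_add_norm_sub_rpow_le_iff_enorm hq₀.le hC]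
  set c := ENNReal.ofReal C
  have hpointwise : ∀ᵐ ω ∂μ, ‖(f + g) ω‖ₑ ^ q + ‖(f - g) ω‖ₑ ^ q
      ≤ 2 * (‖f ω‖ₑ ^ 2 + c * ‖g ω‖ₑ ^ 2) ^ (q / 2) := by
    filter_upwards [coeFn_add f g, coeFn_sub f g] with ω hadd hsub
    rw [hadd, hsub, Pi.add_apply, Pi.sub_apply, ← norm_add_rpow_add_norm_sub_rpow_le_iff_enorm hq₀.le hC]
    exact hE _ _
  have hmeas (a : ℝ≥0∞) (h : Lp E (ENNReal.ofReal q) μ) :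
      AEMeasurable (fun ω => a * ‖h ω‖ₑ ^ 2) μ :=
    ((Lp.aestronglyMeasurable h).enorm.pow_const 2).const_mul a
  calc ‖f + g‖ₑ ^ q + ‖f - g‖ₑ ^ q = ∫⁻ ω, ‖(f + g) ω‖ₑ ^ q + ‖(f - g) ω‖ₑ ^ q ∂μ := by
        rw [enorm_rpow_eq_lintegral hq₀, enorm_rpow_eq_lintegral hq₀,
          lintegral_add_left' ((Lp.aestronglyMeasurable _).enorm.pow_const q)]
    _ ≤ ∫⁻ ω, 2 * (‖f ω‖ₑ ^ 2 + c * ‖g ω‖ₑ ^ 2) ^ (q / 2) ∂μ := lintegral_mono_ae hpointwise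
    _ = 2 * ∫⁻ ω, (1 * ‖f ω‖ₑ ^ 2 + c * ‖g ω‖ₑ ^ 2) ^ (q / 2) ∂μ := by
        simp only [one_mul]; exact lintegral_const_mul' _ _ (by norm_num)
    _ ≤ 2 * (1 * ‖f‖ₑ ^ 2 + c * ‖g‖ₑ ^ 2) ^ (q / 2) := by
        gcongr
        rw [← lintegral_mul_enorm_sq_rpow hq₀, ← lintegral_mul_enorm_sq_rpow hq₀]
        exact lintegral_add_rpow_le (hmeas 1 f) (hmeas c g) (by linarith)
    _ = _ := by rw [one_mul]

end MeasureTheory.Lp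

theorem stmt4_general {X : Type*} [NormedAddCommGroup X] [NormedSpace ℝ X]
    {Ω : Type*} [MeasurableSpace Ω] (μ : Measure Ω)
    (s q : ℝ) (hq : 2 ≤ q) [Fact (1 ≤ ENNReal.ofReal q)]
    (hρ : ∀ τ : ℝ, 0 < τ → ∀ x y : X, ‖x‖ = 1 → ‖y‖ = 1 →
      (‖x + τ • y‖ + ‖x - τ • y‖) / 2 - 1 ≤ s * τ ^ 2) :
    ∀ τ : ℝ, 0 < τ → ∀ f g : Lp X (ENNReal.ofReal q) μ, ‖f‖ = 1 → ‖g‖ = 1 →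
      (‖f + τ • g‖ + ‖f - τ • g‖) / 2 - 1 ≤ 4 * (s + q) * τ ^ 2 := by
  intro τ hτ f g hf hg
  obtain ⟨z, hz⟩ : ∃ z : X, z ≠ 0 := by
    by_contra! hX
    have : g = 0 := Lp.eq_zero_iff_ae_eq_zero.2 (ae_of_all _ fun ω => hX _)
    simp [this] at hg
  have hs := smoothness_const_nonneg hρ hz
  set C := 4 * s + 8 * q - 1
  have hC : 0 ≤ C := by linarith
  have hLq := Lp.norm_add_rpow_add_norm_sub_rpow_le hq hC
    (norm_add_rpow_add_norm_sub_rpow_le hρ hs hq) f (τ • g)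
  rw [hf, norm_smul, hg, norm_of_nonneg hτ.le, mul_one, one_pow] at hLq
  have hmean_sq := sq_add_div_two_le_of_rpow_add_rpow_le (norm_nonneg _) (norm_nonneg _)
    (by positivity) (by linarith) hLq
  have hmean : (‖f + τ • g‖ + ‖f - τ • g‖) / 2 ≤ 1 + C * τ ^ 2 / 2 :=
    (pow_le_pow_iff_left₀ (by positivity) (by positivity) two_ne_zero).1
      (by nlinarith [sq_nonneg (C * τ ^ 2)])
  nlinarith [sq_nonneg τ]

theorem stmt4 {X : Type*} [NormedAddCommGroup X] [NormedSpace ℝ X]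
    {Ω : Type*} [MeasurableSpace Ω] (μ : Measure Ω)
    (s q : ℝ) (hs : 0 < s) (hq : 2 ≤ q) [Fact (1 ≤ ENNReal.ofReal q)]
    (hρ : ∀ τ : ℝ, 0 < τ → ∀ x y : X, ‖x‖ = 1 → ‖y‖ = 1 →
      (‖x + τ • y‖ + ‖x - τ • y‖) / 2 - 1 ≤ s * τ ^ 2) :
    ∀ τ : ℝ, 0 < τ → ∀ f g : Lp X (ENNReal.ofReal q) μ, ‖f‖ = 1 → ‖g‖ = 1 →
      (‖f + τ • g‖ + ‖f - τ • g‖) / 2 - 1 ≤ 4 * (s + q) * τ ^ 2 :=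
  stmt4_general μ s q hq hρ
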